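/- Let n and k be positive integers, ε > 0, and v : [n] → ℝ. Suppose there exist m indices i₁ < i₂ < ⋯ < i_m in {1,…,n−1} with i_{ℓ+1} ≥ i_ℓ + 2 for all ℓ, such that v(i_ℓ + 1) − v(i_ℓ) = 2ε/n for every ℓ ∈ {1,…,m}. Then for every k-piecewise constant function h : [n] → ℝ, it holds that ∑_{i=1}^n |v(i) − h(i)| ≥ (m − k)·2ε/n. -/
import Mathlib


/-- `h` is `j`-piecewise constant on the integer interval `[a, b)`: there are breakpoints
`a = f 0 < f 1 < ⋯ < f j = b` such that `h` is constant on each `[f i, f (i+1))`. -/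
def PiecewiseConstOn (h : ℕ → ℝ) (a b : ℕ) (j : ℕ) : Prop :=
  ∃ f : Fin (j + 1) → ℕ, StrictMono f ∧ f 0 = a ∧ f (Fin.last j) = b ∧
    ∀ i : Fin j, ∀ x ∈ Finset.Ico (f i.castSucc) (f i.succ),
      ∀ y ∈ Finset.Ico (f i.castSucc) (f i.succ), h x = h y

/-- `h` is a `k`-histogram (k-piecewise constant function) on `[n] = {1, …, n}`. -/
def IsKHistogram (h : ℕ → ℝ) (n k : ℕ) : Prop :=
  ∃ j : ℕ, 1 ≤ j ∧ j ≤ k ∧ PiecewiseConstOn h 1 (n + 1) j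

lemma exists_interval {j : ℕ} (f : Fin (j+1) → ℕ) (hf : StrictMono f) (x : ℕ)
    (h1 : f 0 ≤ x) (h2 : x < f (Fin.last j)) :
    ∃ i : Fin j, f i.castSucc ≤ x ∧ x < f i.succ := by
  classical
  set s : Finset (Fin (j+1)) := Finset.univ.filter (fun i => f i ≤ x) with hs
  have h0 : (0 : Fin (j+1)) ∈ s := by simp [hs, h1]
  have hne : s.Nonempty := ⟨0, h0⟩
  set i0 := s.max' hne with hi0
  have hmem : i0 ∈ s := s.max'_mem hne
  have hfi0 : f i0 ≤ x := by
    have := hmem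
    simp [hs] at this
    exact this
  have hlt : (i0 : ℕ) < j := by
    by_contra hle
    have hi0eq : i0 = Fin.last j := by
      apply Fin.ext
      have := i0.isLt
      simp [Fin.last]
      omega
    rw [hi0eq] at hfi0; omega
  refine ⟨⟨(i0 : ℕ), hlt⟩, ?_, ?_⟩
  · have hcs : Fin.castSucc ⟨(i0:ℕ), hlt⟩ = i0 := by
      apply Fin.ext; simp
    rw [hcs]; exact hfi0
  · by_contra hle
    push_neg at hle
    have hmem2 : Fin.succ ⟨(i0:ℕ), hlt⟩ ∈ s := by
      simp only [hs, Finset.mem_filter, Finset.mem_univ, true_and]; exact hle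
    have hle2 := s.le_max' _ hmem2
    rw [← hi0] at hle2
    have : (i0:ℕ) + 1 ≤ (i0:ℕ) := by
      simpa [Fin.le_def] using hle2
    omega

/-- Suppose `v : [n] → ℝ` has `m` separated indices
`i_1 < i_2 < ⋯ < i_m` in `{1, …, n-1}` (with `i_{ℓ+1} ≥ i_ℓ + 2`) at each of which
`v(i_ℓ + 1) - v(i_ℓ) = 2ε/n`.  Then every `k`-piecewise constant `h : [n] → ℝ`
satisfies `∑_{i=1}^n |v i - h i| ≥ (m - k)·2ε/n`. -/
theorem far_from_histogram_lower_bound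
    (n k m : ℕ) (hn : 0 < n) (hk : 0 < k) (ε : ℝ) (hε : 0 < ε)
    (v : ℕ → ℝ) (idx : Fin m → ℕ)
    (hmono : StrictMono idx)
    (hgap : ∀ i i' : Fin m, (i' : ℕ) = (i : ℕ) + 1 → idx i + 2 ≤ idx i')
    (hlb : ∀ i : Fin m, 1 ≤ idx i) (hub : ∀ i : Fin m, idx i + 1 ≤ n)
    (hjump : ∀ i : Fin m, v (idx i + 1) - v (idx i) = 2 * ε / n)
    (h : ℕ → ℝ) (hhist : IsKHistogram h n k) :
    ((m : ℝ) - k) * (2 * ε / n) ≤ ∑ i ∈ Finset.Icc 1 n, |v i - h i| := by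
  classical
  obtain ⟨j, hj1, hjk, f, hfmono, hf0, hflast, hconst⟩ := hhist
  have hpos : (0:ℝ) < 2 * ε / n := by positivity
  -- the interval containing each idx ℓ
  have hgex : ∀ ℓ : Fin m, ∃ i : Fin j, f i.castSucc ≤ idx ℓ ∧ idx ℓ < f i.succ := by
    intro ℓ
    apply exists_interval f hfmono
    · rw [hf0]; exact hlb ℓ
    · rw [hflast]; have := hub ℓ; omega
  choose g hg1 hg2 using hgex
  -- strengthened gap
  have hgap' : ∀ a b : Fin m, a < b → idx a + 2 ≤ idx b := by
    intro a b hab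
    have hab' : (a:ℕ) + 1 ≤ (b:ℕ) := hab
    have hlt : (a:ℕ) + 1 < m := lt_of_le_of_lt hab' b.isLt
    have h1 := hgap a ⟨(a:ℕ)+1, hlt⟩ rfl
    have h2 : idx ⟨(a:ℕ)+1, hlt⟩ ≤ idx b := hmono.monotone (by simpa [Fin.le_def] using hab')
    omega
  set S : Finset (Fin m) := Finset.univ.filter (fun ℓ => idx ℓ + 1 < f (g ℓ).succ) with hS
  set C : Finset (Fin m) := Finset.univ.filter (fun ℓ => ¬ (idx ℓ + 1 < f (g ℓ).succ)) with hC
  -- cut pairs: breakpoint equals idx ℓ + 1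
  have hcut : ∀ ℓ ∈ C, f (g ℓ).succ = idx ℓ + 1 := by
    intro ℓ hℓ
    have h1 := hg2 ℓ
    have h2 : f (g ℓ).succ ≤ idx ℓ + 1 := by simpa [hC] using hℓ
    omega
  -- counting: C.card ≤ j - 1
  have hCcard : C.card + 1 ≤ j := by
    have hinj : ∀ a ∈ C, ∀ b ∈ C, (g a).succ = (g b).succ → a = b := by
      intro a ha b hb hab
      have h1 := hcut a ha
      have h2 := hcut b hb
      rw [hab, h2] at h1
      exact hmono.injective (by omega)
    have hmaps : ∀ a ∈ C, (g a).succ ∈ ((Finset.univ : Finset (Fin (j+1))).erase 0).erase (Fin.last j) := by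
      intro a ha
      rw [Finset.mem_erase, Finset.mem_erase]
      refine ⟨?_, Fin.succ_ne_zero _, Finset.mem_univ _⟩
      intro heq
      have h1 := hcut a ha
      rw [heq, hflast] at h1
      have := hub a
      omega
    have hcard := Finset.card_le_card_of_injOn (fun a => (g a).succ) hmaps
      (fun a ha b hb => hinj a ha b hb)
    have h0last : (0 : Fin (j+1)) ≠ Fin.last j := by
      intro heq
      have := congrArg Fin.val heq
      simp [Fin.last] at this
      omega
    have hc1 : (((Finset.univ : Finset (Fin (j+1))).erase 0).erase (Fin.last j)).card = j - 1 := by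
      rw [Finset.card_erase_of_mem (Finset.mem_erase.mpr ⟨Ne.symm h0last, Finset.mem_univ _⟩),
        Finset.card_erase_of_mem (Finset.mem_univ _), Finset.card_univ, Fintype.card_fin]
      omega
    omega
  have hScard : (m:ℝ) - k ≤ (S.card : ℝ) := by
    have hsum : S.card + C.card = m := by
      rw [hS, hC]
      rw [Finset.card_filter_add_card_filter_not, Finset.card_univ, Fintype.card_fin]
    have : m ≤ S.card + k := by omega
    have := (Nat.cast_le (α := ℝ)).mpr this
    push_cast at this
    linarith
  -- key per-pair bound
  have key : ∀ ℓ ∈ S, 2 * ε / n ≤ |v (idx ℓ) - h (idx ℓ)| + |v (idx ℓ + 1) - h (idx ℓ + 1)| := by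
    intro ℓ hℓ
    have hℓ' : idx ℓ + 1 < f (g ℓ).succ := by simp [hS] at hℓ; exact hℓ
    have hmem1 : idx ℓ ∈ Finset.Ico (f (g ℓ).castSucc) (f (g ℓ).succ) := by
      rw [Finset.mem_Ico]; exact ⟨hg1 ℓ, hg2 ℓ⟩
    have hmem2 : idx ℓ + 1 ∈ Finset.Ico (f (g ℓ).castSucc) (f (g ℓ).succ) := by
      rw [Finset.mem_Ico]; exact ⟨le_trans (hg1 ℓ) (Nat.le_succ _), hℓ'⟩
    have heq : h (idx ℓ + 1) = h (idx ℓ) := hconst (g ℓ) _ hmem2 _ hmem1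
    have habs1 := le_abs_self (v (idx ℓ + 1) - h (idx ℓ + 1))
    have habs2 := neg_abs_le (v (idx ℓ) - h (idx ℓ))
    have hj := hjump ℓ
    linarith
  -- pair disjointness
  have hdisj : (S : Set (Fin m)).PairwiseDisjoint (fun ℓ => ({idx ℓ, idx ℓ + 1} : Finset ℕ)) := by
    intro a _ b _ hab
    have hd : ∀ x y : Fin m, x < y →
        Disjoint ({idx x, idx x + 1} : Finset ℕ) ({idx y, idx y + 1} : Finset ℕ) := by
      intro x y hxy
      have := hgap' x y hxy
      rw [Finset.disjoint_left]
      intro c hc hc'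
      simp [Finset.mem_insert] at hc hc'
      omega
    rcases lt_or_gt_of_ne hab with hlt | hlt
    · exact hd a b hlt
    · exact (hd b a hlt).symm
  set T : Finset ℕ := S.biUnion (fun ℓ => ({idx ℓ, idx ℓ + 1} : Finset ℕ)) with hT
  have hTsub : T ⊆ Finset.Icc 1 n := by
    intro x hx
    rw [hT, Finset.mem_biUnion] at hx
    obtain ⟨ℓ, _, hxℓ⟩ := hx
    simp [Finset.mem_insert] at hxℓ
    have := hlb ℓ; have := hub ℓ
    rw [Finset.mem_Icc]
    omega
  calc ((m:ℝ) - k) * (2 * ε / n)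
      ≤ (S.card : ℝ) * (2 * ε / n) := mul_le_mul_of_nonneg_right hScard hpos.le
    _ = ∑ _ℓ ∈ S, (2 * ε / n) := by rw [Finset.sum_const, nsmul_eq_mul]
    _ ≤ ∑ ℓ ∈ S, ∑ i ∈ ({idx ℓ, idx ℓ + 1} : Finset ℕ), |v i - h i| := by
        apply Finset.sum_le_sum
        intro ℓ hℓ
        rw [Finset.sum_pair (by omega : idx ℓ ≠ idx ℓ + 1)]
        exact key ℓ hℓ
    _ = ∑ i ∈ T, |v i - h i| := (Finset.sum_biUnion hdisj).symm
    _ ≤ ∑ i ∈ Finset.Icc 1 n, |v i - h i| :=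
        Finset.sum_le_sum_of_subset_of_nonneg hTsub (fun i _ _ => abs_nonneg _)
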